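/- Let S be a nonempty compact subset of ℝ^D, P a Borel probability measure on S, and ε > 0. Let (X_i)_{i≥1} be i.i.d. random variables with distribution P. Fix an index k ≥ 1 and a Borel function f : S → ℝ with ∫_S f² dP < ∞. For N ≥ k define q_N(x) = Σ_{j=1}^N k_ε(x, X_j) and A^N_{k,i} = [k_ε(X_k, X_i)/q_N(X_i)] / (Σ_{j=1}^N k_ε(X_k, X_j)/q_N(X_j)) for 1 ≤ i ≤ N. Then almost surely, Σ_{i=1}^N A^N_{k,i} f(X_i) converges to T_ε f(X_k) as N → ∞. -/

import Mathlib

/-!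
Write `q_N(z) = ∑_{j<N} k_ε(z, X_j)`. The row sum equals
`(∑_i k_ε(x, X_i) f(X_i) / q_N(X_i)) / (∑_i k_ε(x, X_i) / q_N(X_i))`, and `T_ε f(x)` is the
quotient of `∫ k_ε(x, y) h(y) / d_ε(y) dP(y)` for `h = f` and `h = 1` (the factors `1 / d_ε(x)`
cancel), so it suffices that `∑_i k_ε(x, X_i) h(X_i) / q_N(X_i)` converges to that integral.

Since `x ↦ k_ε(x, y)` is Lipschitz uniformly in `y`, the strong law of large numbers at the points
of a countable dense set upgrades to a uniform law on the compact set `S`: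
`(1/N) ∑_j k_ε(x, X_j) g(X_j) → ∫ k_ε(x, y) g(y) dP(y)` uniformly in `x ∈ S`, for integrable `g`.
For `g = 1` this says `q_N / N → d_ε` uniformly on `S`, where the continuous positive `d_ε` is
bounded below; hence `d_ε(X_i) / (q_N(X_i) / N) → 1` uniformly in `i`, and the uniform law for
`g = h / d_ε` gives the claim.
-/

open MeasureTheory

noncomputable section

/-- The Gaussian-like kernel `k_ε(x,y) = exp(-‖x-y‖²/(4ε²))`. -/
def gaussKer {D : ℕ} (ε : ℝ) (x y : EuclideanSpace ℝ (Fin D)) : ℝ :=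
  Real.exp (-‖x - y‖ ^ 2 / (4 * ε ^ 2))

/-- The degree function `d_ε(x) = ∫ k_ε(x,x') dP(x')`. -/
def degFun {D : ℕ} (ε : ℝ) (μ : Measure (EuclideanSpace ℝ (Fin D)))
    (x : EuclideanSpace ℝ (Fin D)) : ℝ :=
  ∫ y, gaussKer ε x y ∂μ

/-- The normalized kernel `Q_ε(x,x') = k_ε(x,x')/(d_ε(x) d_ε(x'))`. -/
def Qker {D : ℕ} (ε : ℝ) (μ : Measure (EuclideanSpace ℝ (Fin D)))
    (x y : EuclideanSpace ℝ (Fin D)) : ℝ :=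
  gaussKer ε x y / (degFun ε μ x * degFun ε μ y)

/-- The normalization `m_ε(x) = ∫ Q_ε(x,x') dP(x')`. -/
def mFun {D : ℕ} (ε : ℝ) (μ : Measure (EuclideanSpace ℝ (Fin D)))
    (x : EuclideanSpace ℝ (Fin D)) : ℝ :=
  ∫ y, Qker ε μ x y ∂μ

/-- The operator `T_ε f(x) = (∫ Q_ε(x,x') f(x') dP(x')) / m_ε(x)`. -/
def Tfun {D : ℕ} (ε : ℝ) (μ : Measure (EuclideanSpace ℝ (Fin D)))
    (f : EuclideanSpace ℝ (Fin D) → ℝ) (x : EuclideanSpace ℝ (Fin D)) : ℝ :=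
  (∫ y, Qker ε μ x y * f y ∂μ) / mFun ε μ x

open Filter Topology Finset
open ProbabilityTheory (IdentDistrib iIndepFun strong_law_ae_real)
open scoped NNReal

section IID

variable {α Ω : Type*} [MeasurableSpace α] [MeasurableSpace Ω] {μ : Measure α} {P : Measure Ω}
  {X : ℕ → Ω → α}

theorem ae_tendsto_mean_comp (hX : ∀ i, Measurable (X i)) (hXμ : ∀ i, P.map (X i) = μ)
    (hXind : iIndepFun X P) {φ : α → ℝ} (hφ : Measurable φ) (hφi : Integrable φ μ) :
    ∀ᵐ ω ∂P, Tendsto (fun N : ℕ => (∑ i ∈ range N, φ (X i ω)) / N) atTop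
      (𝓝 (∫ y, φ y ∂μ)) := by
  have hident (i : ℕ) : IdentDistrib (φ ∘ X i) (φ ∘ X 0) P P :=
    (IdentDistrib.mk (hX i).aemeasurable (hX 0).aemeasurable (by rw [hXμ, hXμ])).comp hφ
  have hint : Integrable (φ ∘ X 0) P := by
    rw [← hXμ 0] at hφi; exact hφi.comp_measurable (hX 0)
  have hmean : ∫ ω, φ (X 0 ω) ∂P = ∫ y, φ y ∂μ := by
    rw [← hXμ 0, integral_map (hX 0).aemeasurable (by rw [hXμ 0]; exact hφ.aestronglyMeasurable)]
  simpa only [hmean, Function.comp_apply] using strong_law_ae_real (fun i => φ ∘ X i) hint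
    (fun i j hij => (hXind.indepFun hij).comp hφ hφ) hident

theorem ae_forall_apply_mem (hX : ∀ i, Measurable (X i)) (hXμ : ∀ i, P.map (X i) = μ)
    {S : Set α} (hμS : μ Sᶜ = 0) : ∀ᵐ ω ∂P, ∀ i, X i ω ∈ S :=
  ae_all_iff.2 fun i => ae_of_ae_map (hX i).aemeasurable (by rw [hXμ]; exact mem_ae_iff.2 hμS)

end IID

theorem integral_pos_of_forall_pos {α : Type*} [MeasurableSpace α] {μ : Measure α} [NeZero μ]
    {f : α → ℝ} (hf : Integrable f μ) (hpos : ∀ x, 0 < f x) : 0 < ∫ x, f x ∂μ := by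
  rw [integral_pos_iff_support_of_nonneg (fun x => (hpos x).le) hf,
    Function.support_eq_univ fun x => (hpos x).ne']
  exact NeZero.pos _

theorem tendstoUniformlyOn_of_lipschitzWith_of_tendsto_dense {ι α β : Type*}
    [PseudoMetricSpace α] [PseudoMetricSpace β] {l : Filter ι} {F : ι → α → β} {f : α → β}
    {S T : Set α} {K : ℝ≥0} (hS : IsCompact S) (hT : Dense T)
    (hF : ∀ᶠ n in l, LipschitzWith K (F n)) (hf : LipschitzWith K f)
    (hFf : ∀ t ∈ T, Tendsto (fun n => F n t) l (𝓝 (f t))) :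
    TendstoUniformlyOn F f l S := by
  rw [Metric.tendstoUniformlyOn_iff]
  intro η hη
  set δ := η / (3 * (K + 1))
  have hδ : 0 < δ := by positivity
  have hKδ : K * δ ≤ η / 3 := by
    rw [mul_div_assoc', div_le_div_iff₀ (by positivity) (by norm_num)]
    nlinarith
  obtain ⟨T', hT'T, hT'fin, hST'⟩ := hS.elim_finite_subcover_image (b := T)
    (c := fun t => Metric.ball t δ) (fun _ _ => Metric.isOpen_ball)
    fun x _ => by
      obtain ⟨t, htT, hxt⟩ := hT.exists_dist_lt x hδ
      exact Set.mem_biUnion htT (Metric.mem_ball.2 hxt)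
  have hnet : ∀ᶠ n in l, ∀ t ∈ T', dist (F n t) (f t) < η / 3 :=
    (eventually_all_finite hT'fin).2 fun t ht =>
      Metric.tendsto_nhds.1 (hFf t (hT'T ht)) _ (by positivity)
  filter_upwards [hF, hnet] with n hFn hnetn x hx
  obtain ⟨t, ht, hxt⟩ := Set.mem_iUnion₂.1 (hST' hx)
  have hKxt : K * dist x t ≤ K * δ := by gcongr; exact (Metric.mem_ball.1 hxt).le
  have hfxt := hf.dist_le_mul x t
  have hFxt := hFn.dist_le_mul x t
  have := hnetn t ht
  calc dist (f x) (F n x) ≤ dist (f x) (f t) + dist (F n t) (f t) + dist (F n x) (F n t) := by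
        rw [dist_comm (F n t), dist_comm (F n x)]; exact dist_triangle4 _ _ _ _
    _ < η := by linarith

theorem TendstoUniformlyOn.limit_div_one {ι α : Type*} {l : Filter ι}
    {r : ι → α → ℝ} {d : α → ℝ} {S : Set α} {c : ℝ} (hr : TendstoUniformlyOn r d l S)
    (hc : 0 < c) (hd : ∀ z ∈ S, c ≤ d z) :
    TendstoUniformlyOn (fun n z => d z / r n z) 1 l S := by
  rw [Metric.tendstoUniformlyOn_iff] at hr ⊢
  intro η hη
  filter_upwards [hr (min (c / 2) (c * η / 2)) (by positivity)] with n hn z hz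
  have hclose := hn z hz
  rw [Real.dist_eq, lt_min_iff] at hclose
  have hr_pos : c / 2 < r n z := by linarith [hd z hz, (abs_lt.1 hclose.1).2]
  have hr0 : 0 < r n z := by linarith
  rw [Pi.one_apply, Real.dist_eq, one_sub_div hr0.ne', abs_div, abs_sub_comm, abs_of_pos hr0,
    div_lt_iff₀ hr0]
  nlinarith [hclose.2]

theorem tendsto_mean_mul_of_tendstoUniformlyOn_one {α : Type*} {S : Set α} {y : ℕ → α}
    (hy : ∀ i, y i ∈ S) {u : ℕ → α → ℝ} (hu : TendstoUniformlyOn u 1 atTop S) {a : ℕ → ℝ}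
    {A : ℝ} (ha : Tendsto (fun N : ℕ => (∑ i ∈ range N, a i) / N) atTop (𝓝 A))
    (hbdd : IsBoundedUnder (· ≤ ·) atTop (fun N : ℕ => (∑ i ∈ range N, |a i|) / N)) :
    Tendsto (fun N : ℕ => (∑ i ∈ range N, a i * u N (y i)) / N) atTop (𝓝 A) := by
  have hsplit (N : ℕ) : (∑ i ∈ range N, a i * u N (y i)) / N
      = (∑ i ∈ range N, a i) / N + (∑ i ∈ range N, a i * (u N (y i) - 1)) / N := by
    rw [← add_div, ← sum_add_distrib]
    exact congrArg (· / (N : ℝ)) (sum_congr rfl fun i _ => by ring)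
  suffices herr :
      Tendsto (fun N : ℕ => (∑ i ∈ range N, a i * (u N (y i) - 1)) / N) atTop (𝓝 0) by
    simpa only [hsplit, add_zero] using ha.add herr
  obtain ⟨C, hC⟩ := hbdd
  rw [Metric.tendsto_nhds]
  intro η hη
  set e := η / (|C| + 1)
  have he : e * |C| < η := by
    rw [div_mul_eq_mul_div, div_lt_iff₀ (by positivity)]; nlinarith [abs_nonneg C]
  filter_upwards [Metric.tendstoUniformlyOn_iff.1 hu e (by positivity), eventually_map.1 hC]
    with N huN hCN
  have hterm (i : ℕ) : |a i * (u N (y i) - 1)| ≤ e * |a i| := by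
    rw [abs_mul, mul_comm]
    gcongr
    simpa [Real.dist_eq, abs_sub_comm] using (huN (y i) (hy i)).le
  calc dist ((∑ i ∈ range N, a i * (u N (y i) - 1)) / N) 0
      ≤ (∑ i ∈ range N, e * |a i|) / N := by
        rw [dist_zero_right, norm_div, Real.norm_natCast]
        gcongr
        exact (norm_sum_le _ _).trans (sum_le_sum fun i _ => hterm i)
    _ = e * ((∑ i ∈ range N, |a i|) / N) := by rw [← mul_sum, mul_div_assoc]
    _ ≤ e * |C| := by gcongr; exact hCN.trans (le_abs_self C)
    _ < η := he

section KernelMean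

variable {α : Type*} [PseudoMetricSpace α] {K : α → α → ℝ} {L : ℝ≥0}

theorem dist_kernel_mean_le (hK : ∀ y, LipschitzWith L (K · y)) (y : ℕ → α) (w : ℕ → ℝ)
    (N : ℕ) (x x' : α) :
    dist ((∑ j ∈ range N, K x (y j) * w j) / N) ((∑ j ∈ range N, K x' (y j) * w j) / N)
      ≤ L * ((∑ j ∈ range N, |w j|) / N) * dist x x' := by
  rw [Real.dist_eq, ← sub_div, ← sum_sub_distrib, abs_div, Nat.abs_cast, mul_div_assoc',
    div_mul_eq_mul_div, mul_right_comm, mul_sum]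
  gcongr
  refine (abs_sum_le_sum_abs _ _).trans (sum_le_sum fun j _ => ?_)
  rw [← sub_mul, abs_mul, ← Real.dist_eq]
  exact mul_le_mul_of_nonneg_right ((hK (y j)).dist_le_mul x x') (abs_nonneg _)

theorem dist_integral_kernel_mul_le [MeasurableSpace α] {μ : Measure α}
    (hK : ∀ y, LipschitzWith L (K · y)) {g : α → ℝ} (hg : Integrable g μ)
    (hKg : ∀ x, Integrable (fun y => K x y * g y) μ) (x x' : α) :
    dist (∫ y, K x y * g y ∂μ) (∫ y, K x' y * g y ∂μ) ≤ L * (∫ y, |g y| ∂μ) * dist x x' := by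
  rw [dist_eq_norm, ← integral_sub (hKg x) (hKg x'), mul_right_comm, ← integral_const_mul]
  refine norm_integral_le_of_norm_le (hg.abs.const_mul _) (ae_of_all _ fun y => ?_)
  rw [← sub_mul, norm_mul, ← dist_eq_norm, Real.norm_eq_abs]
  gcongr
  exact (hK y).dist_le_mul x x'

theorem ae_tendstoUniformlyOn_kernel_mean [TopologicalSpace.SeparableSpace α] [MeasurableSpace α]
    {Ω : Type*} [MeasurableSpace Ω] {μ : Measure α} {P : Measure Ω} {X : ℕ → Ω → α}
    (hX : ∀ i, Measurable (X i)) (hXμ : ∀ i, P.map (X i) = μ) (hXind : iIndepFun X P)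
    {B : ℝ} (hK : ∀ y, LipschitzWith L (K · y))
    (hKm : ∀ x, Measurable (K x)) (hKB : ∀ x y, ‖K x y‖ ≤ B)
    {S : Set α} (hS : IsCompact S) {g : α → ℝ} (hg : Measurable g) (hgi : Integrable g μ) :
    ∀ᵐ ω ∂P, TendstoUniformlyOn (fun N x => (∑ j ∈ range N, K x (X j ω) * g (X j ω)) / N)
      (fun x => ∫ y, K x y * g y ∂μ) atTop S := by
  obtain ⟨T, hTc, hTd⟩ := TopologicalSpace.exists_countable_dense α
  have hKg (x : α) : Integrable (fun y => K x y * g y) μ :=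
    hgi.bdd_mul (hKm x).aestronglyMeasurable (ae_of_all _ (hKB x))
  have hdense : ∀ᵐ ω ∂P, ∀ t ∈ T,
      Tendsto (fun N : ℕ => (∑ j ∈ range N, K t (X j ω) * g (X j ω)) / N) atTop
        (𝓝 (∫ y, K t y * g y ∂μ)) :=
    (ae_ball_iff hTc).2 fun t _ => ae_tendsto_mean_comp hX hXμ hXind ((hKm t).mul hg) (hKg t)
  filter_upwards [hdense, ae_tendsto_mean_comp hX hXμ hXind hg.abs hgi.abs]
    with ω hdenseω habsω
  set C := ∫ y, |g y| ∂μ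
  refine tendstoUniformlyOn_of_lipschitzWith_of_tendsto_dense (K := Real.toNNReal (L * (C + 1)))
    hS hTd ?_ ?_ hdenseω
  · filter_upwards [habsω.eventually (gt_mem_nhds (lt_add_one C))] with N hN
    refine LipschitzWith.of_dist_le' fun x x' => (dist_kernel_mean_le hK _ _ N x x').trans ?_
    gcongr
  · refine LipschitzWith.of_dist_le' fun x x' =>
      (dist_integral_kernel_mul_le hK hgi hKg x x').trans ?_
    gcongr
    linarith

end KernelMean

theorem lipschitzWith_exp_neg_sq : LipschitzWith 1 (fun t : ℝ => Real.exp (-t ^ 2)) := by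
  refine lipschitzWith_of_nnnorm_deriv_le (by fun_prop) fun t => ?_
  have hderiv : deriv (fun t : ℝ => Real.exp (-t ^ 2)) t = -(2 * t) * Real.exp (-t ^ 2) := by
    simp [mul_comm]
  rw [← NNReal.coe_le_coe, coe_nnnorm, hderiv, norm_mul, norm_neg, Real.norm_eq_abs,
    Real.norm_eq_abs, abs_of_pos (Real.exp_pos _), NNReal.coe_one, abs_mul, abs_two]
  have h2t : 2 * |t| ≤ Real.exp (t ^ 2) := by
    nlinarith [Real.add_one_le_exp (t ^ 2), sq_abs t, sq_nonneg (|t| - 1)]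
  rw [Real.exp_neg, mul_inv_le_iff₀ (Real.exp_pos _)]
  linarith

section Gaussian

variable {D : ℕ} {ε : ℝ} {μ : Measure (EuclideanSpace ℝ (Fin D))}

-- Also valid for `ε = 0`, where both sides are `1` since `x / 0 = 0`.
theorem gaussKer_eq_exp_neg_sq (ε : ℝ) (x y : EuclideanSpace ℝ (Fin D)) :
    gaussKer ε x y = Real.exp (-((2 * ε)⁻¹ * ‖x - y‖) ^ 2) := by
  rw [gaussKer, mul_pow, inv_pow, mul_pow]; ring_nf

theorem lipschitzWith_gaussKer_left (ε : ℝ) (y : EuclideanSpace ℝ (Fin D)) :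
    LipschitzWith ‖(2 * ε)⁻¹‖₊ (fun x => gaussKer ε x y) := by
  have h := lipschitzWith_exp_neg_sq.comp ((lipschitzWith_smul (2 * ε)⁻¹).comp
    (LipschitzWith.dist_left y))
  simpa [Function.comp_def, gaussKer_eq_exp_neg_sq, dist_eq_norm] using h

theorem gaussKer_pos (ε : ℝ) (x y : EuclideanSpace ℝ (Fin D)) : 0 < gaussKer ε x y :=
  Real.exp_pos _

theorem norm_gaussKer_le_one (ε : ℝ) (x y : EuclideanSpace ℝ (Fin D)) :
    ‖gaussKer ε x y‖ ≤ 1 := by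
  rw [Real.norm_of_nonneg (gaussKer_pos ε x y).le, gaussKer, Real.exp_le_one_iff]
  exact div_nonpos_of_nonpos_of_nonneg (neg_nonpos.2 (sq_nonneg _)) (by positivity)

theorem measurable_gaussKer (ε : ℝ) (x : EuclideanSpace ℝ (Fin D)) :
    Measurable (gaussKer ε x) := by
  unfold gaussKer; fun_prop

theorem integrable_gaussKer_mul (x : EuclideanSpace ℝ (Fin D))
    {g : EuclideanSpace ℝ (Fin D) → ℝ} (hg : Integrable g μ) :
    Integrable (fun y => gaussKer ε x y * g y) μ :=
  hg.bdd_mul (measurable_gaussKer ε x).aestronglyMeasurable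
    (ae_of_all _ (norm_gaussKer_le_one ε x))

theorem degFun_pos [IsProbabilityMeasure μ] (x : EuclideanSpace ℝ (Fin D)) :
    0 < degFun ε μ x :=
  integral_pos_of_forall_pos (by simpa using integrable_gaussKer_mul x (integrable_const 1))
    (gaussKer_pos ε x)

theorem continuous_degFun [IsFiniteMeasure μ] : Continuous (degFun ε μ) := by
  have h := dist_integral_kernel_mul_le (μ := μ) (lipschitzWith_gaussKer_left ε)
    (integrable_const 1) (fun x => integrable_gaussKer_mul x (integrable_const 1))
  simp only [mul_one] at h
  exact (LipschitzWith.of_dist_le' (f := degFun ε μ) h).continuous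

theorem exists_pos_le_degFun [IsProbabilityMeasure μ] {S : Set (EuclideanSpace ℝ (Fin D))}
    (hS : IsCompact S) : ∃ c > 0, ∀ z ∈ S, c ≤ degFun ε μ z :=
  hS.exists_forall_le' continuous_degFun.continuousOn fun z _ => degFun_pos z

theorem integrable_div_degFun [IsProbabilityMeasure μ] {S : Set (EuclideanSpace ℝ (Fin D))}
    (hS : IsCompact S) (hμS : μ Sᶜ = 0) {h : EuclideanSpace ℝ (Fin D) → ℝ}
    (hh : Integrable h μ) : Integrable (fun y => h y / degFun ε μ y) μ := by
  obtain ⟨c, hc, hcd⟩ := exists_pos_le_degFun (ε := ε) (μ := μ) hS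
  simp_rw [div_eq_inv_mul]
  have hinv : Continuous fun z => (degFun ε μ z)⁻¹ :=
    continuous_degFun.inv₀ fun z => (degFun_pos z).ne'
  refine hh.bdd_mul (c := c⁻¹) hinv.aestronglyMeasurable ?_
  filter_upwards [mem_ae_iff.2 hμS] with z hz
  rw [norm_inv, Real.norm_of_nonneg (degFun_pos z).le]
  exact inv_anti₀ hc (hcd z hz)

theorem Tfun_eq_div [IsProbabilityMeasure μ] (f : EuclideanSpace ℝ (Fin D) → ℝ)
    (x : EuclideanSpace ℝ (Fin D)) :
    Tfun ε μ f x = (∫ y, gaussKer ε x y * (f y / degFun ε μ y) ∂μ) /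
      ∫ y, gaussKer ε x y * (1 / degFun ε μ y) ∂μ := by
  have hQ (h : EuclideanSpace ℝ (Fin D) → ℝ) :
      ∫ y, Qker ε μ x y * h y ∂μ =
        (∫ y, gaussKer ε x y * (h y / degFun ε μ y) ∂μ) / degFun ε μ x := by
    rw [← integral_div]
    congr 1 with y
    rw [Qker]; ring
  have hm := hQ fun _ => 1
  simp only [mul_one] at hm
  rw [Tfun, mFun, hQ, hm, div_div_div_cancel_right₀ (degFun_pos x).ne']

theorem ae_tendsto_sum_gaussKer_mul_div_sum [IsProbabilityMeasure μ] {Ω : Type*}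
    [MeasurableSpace Ω] {P : Measure Ω} {X : ℕ → Ω → EuclideanSpace ℝ (Fin D)}
    (hX : ∀ i, Measurable (X i)) (hXμ : ∀ i, P.map (X i) = μ) (hXind : iIndepFun X P)
    {S : Set (EuclideanSpace ℝ (Fin D))} (hS : IsCompact S) (hμS : μ Sᶜ = 0)
    (h : EuclideanSpace ℝ (Fin D) → ℝ) (hh : Measurable h) (hhi : Integrable h μ) :
    ∀ᵐ ω ∂P, ∀ x ∈ S, Tendsto (fun N => ∑ i ∈ range N,
        gaussKer ε x (X i ω) * h (X i ω) / ∑ j ∈ range N, gaussKer ε (X i ω) (X j ω))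
      atTop (𝓝 (∫ y, gaussKer ε x y * (h y / degFun ε μ y) ∂μ)) := by
  obtain ⟨c, hc, hcd⟩ := exists_pos_le_degFun (ε := ε) (μ := μ) hS
  set g := fun y => h y / degFun ε μ y
  have hgm : Measurable g := hh.div continuous_degFun.measurable
  have hgi : Integrable g μ := integrable_div_degFun hS hμS hhi
  have hULLN (φ : EuclideanSpace ℝ (Fin D) → ℝ) (hφ : Measurable φ) (hφi : Integrable φ μ) :=
    ae_tendstoUniformlyOn_kernel_mean hX hXμ hXind (lipschitzWith_gaussKer_left ε)
      (measurable_gaussKer ε) (norm_gaussKer_le_one ε) hS hφ hφi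
  filter_upwards [ae_forall_apply_mem hX hXμ hμS,
    hULLN (fun _ => 1) measurable_const (integrable_const 1), hULLN g hgm hgi,
    ae_tendsto_mean_comp hX hXμ hXind hgm.abs hgi.abs] with ω hXS hdeg hmean habs x hx
  simp only [mul_one] at hdeg
  have hu := TendstoUniformlyOn.limit_div_one (d := degFun ε μ) hdeg hc hcd
  have hbdd : IsBoundedUnder (· ≤ ·) atTop
      (fun N : ℕ => (∑ j ∈ range N, |gaussKer ε x (X j ω) * g (X j ω)|) / N) := by
    refine habs.isBoundedUnder_le.mono_le (Eventually.of_forall fun N => ?_)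
    refine div_le_div_of_nonneg_right (sum_le_sum fun j _ => ?_) N.cast_nonneg
    rw [abs_mul, ← Real.norm_eq_abs (gaussKer _ _ _)]
    exact mul_le_of_le_one_left (abs_nonneg _) (norm_gaussKer_le_one ε _ _)
  refine (tendsto_mean_mul_of_tendstoUniformlyOn_one hXS hu (hmean.tendsto_at hx) hbdd).congr
    fun N => ?_
  rw [sum_div]
  refine sum_congr rfl fun i hi => ?_
  have hN : (N : ℝ) ≠ 0 := Nat.cast_ne_zero.2 (ne_zero_of_lt (mem_range.1 hi))
  have hd := (degFun_pos (ε := ε) (μ := μ) (X i ω)).ne'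
  simp only [g]
  field_simp

end Gaussian

theorem stmt1_general {D : ℕ} (S : Set (EuclideanSpace ℝ (Fin D))) (hS : IsCompact S)
    (μ : Measure (EuclideanSpace ℝ (Fin D))) [IsProbabilityMeasure μ]
    (hμS : μ Sᶜ = 0) (ε : ℝ)
    {Ω : Type*} [MeasurableSpace Ω] (ℙ : Measure Ω)
    (X : ℕ → Ω → EuclideanSpace ℝ (Fin D))
    (hXmeas : ∀ i, Measurable (X i))
    (hXdist : ∀ i, Measure.map (X i) ℙ = μ)
    (hXindep : ProbabilityTheory.iIndepFun X ℙ)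
    (k : ℕ) (f : EuclideanSpace ℝ (Fin D) → ℝ) (hf : Measurable f)
    (hf2 : Integrable (fun x => f x ^ 2) μ) :
    ∀ᵐ ω ∂ℙ, Filter.Tendsto
      (fun N => ∑ i ∈ Finset.range N,
        (gaussKer ε (X k ω) (X i ω) / (∑ j ∈ Finset.range N, gaussKer ε (X i ω) (X j ω))) /
          (∑ j ∈ Finset.range N,
            gaussKer ε (X k ω) (X j ω) / (∑ j' ∈ Finset.range N, gaussKer ε (X j ω) (X j' ω)))
          * f (X i ω))
      Filter.atTop (nhds (Tfun ε μ f (X k ω))) := by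
  have hfi : Integrable f μ :=
    ((memLp_two_iff_integrable_sq hf.aestronglyMeasurable).2 hf2).integrable one_le_two
  have hlim := ae_tendsto_sum_gaussKer_mul_div_sum (ε := ε) hXmeas hXdist hXindep hS hμS
  filter_upwards [hlim f hf hfi, hlim (fun _ => 1) measurable_const (integrable_const 1),
    ae_forall_apply_mem hXmeas hXdist hμS] with ω hnum hden hXS
  simp only [mul_one] at hden
  have hden_pos : 0 < ∫ y, gaussKer ε (X k ω) y * (1 / degFun ε μ y) ∂μ :=
    integral_pos_of_forall_pos
      (integrable_gaussKer_mul _ (integrable_div_degFun hS hμS (integrable_const 1)))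
      fun y => mul_pos (gaussKer_pos ε _ y) (one_div_pos.2 (degFun_pos y))
  rw [Tfun_eq_div]
  refine ((hnum _ (hXS k)).div (hden _ (hXS k)) hden_pos.ne').congr fun N => ?_
  rw [Pi.div_apply, sum_div]
  exact sum_congr rfl fun i _ => by ring

/-- Almost surely, the graph-Laplacian row averages
`Σ_{i=1}^N A^N_{k,i} f(X_i)` converge to `T_ε f(X_k)` as `N → ∞`, where the `X_i` are i.i.d.
samples from `P` and `f ∈ L²(S,P)`. -/
theorem stmt1 {D : ℕ} (S : Set (EuclideanSpace ℝ (Fin D))) (hS : IsCompact S)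
    (hSne : S.Nonempty) (μ : Measure (EuclideanSpace ℝ (Fin D))) [IsProbabilityMeasure μ]
    (hμS : μ Sᶜ = 0) (ε : ℝ) (hε : 0 < ε)
    {Ω : Type*} [MeasurableSpace Ω] (ℙ : Measure Ω) [IsProbabilityMeasure ℙ]
    (X : ℕ → Ω → EuclideanSpace ℝ (Fin D))
    (hXmeas : ∀ i, Measurable (X i))
    (hXdist : ∀ i, Measure.map (X i) ℙ = μ)
    (hXindep : ProbabilityTheory.iIndepFun X ℙ)
    (k : ℕ) (f : EuclideanSpace ℝ (Fin D) → ℝ) (hf : Measurable f)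
    (hf2 : Integrable (fun x => f x ^ 2) μ) :
    ∀ᵐ ω ∂ℙ, Filter.Tendsto
      (fun N => ∑ i ∈ Finset.range N,
        (gaussKer ε (X k ω) (X i ω) / (∑ j ∈ Finset.range N, gaussKer ε (X i ω) (X j ω))) /
          (∑ j ∈ Finset.range N,
            gaussKer ε (X k ω) (X j ω) / (∑ j' ∈ Finset.range N, gaussKer ε (X j ω) (X j' ω)))
          * f (X i ω))
      Filter.atTop (nhds (Tfun ε μ f (X k ω))) :=
  stmt1_general S hS μ hμS ε ℙ X hXmeas hXdist hXindep k f hf hf2
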